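/- arXiv:2407.02950 — 7 statements merged into one kernel-verified Lean document; each statement's English description precedes it below -/
import Mathlib

section
/- Let V be a real inner product space, and let s : V × V → ℝ be a symmetric positive semidefinite bilinear form on V. Define a(φ,ψ) := b(φ,ψ) + s(φ,ψ), where b is another symmetric positive semidefinite bilinear form on V. If φ_h ∈ V satisfies a(φ_h, ψ) = b(φ̃, ψ) for all ψ ∈ V (for some φ̃ ∈ V), then a(φ_h,φ_h) ≤ b(φ̃,φ̃) − s(φ_h,φ_h); in particular a(φ_h,φ_h) ≤ b(φ̃,φ̃). -/
/-- Abstract stability estimate (Theorem 5.1, eq. (stabest)) for the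
ghost-penalty extension. -/
theorem stmt0
    {V : Type*} [NormedAddCommGroup V] [InnerProductSpace ℝ V]
    (b s : LinearMap.BilinForm ℝ V)
    (hbsymm : ∀ x y, b x y = b y x) (hbpos : ∀ x, 0 ≤ b x x)
    (hssymm : ∀ x y, s x y = s y x) (hspos : ∀ x, 0 ≤ s x x)
    (a : LinearMap.BilinForm ℝ V) (ha : ∀ x y, a x y = b x y + s x y)
    (φh φt : V)
    (hsol : ∀ ψ : V, a φh ψ = b φt ψ) :
    a φh φh ≤ b φt φt - s φh φh ∧ a φh φh ≤ b φt φt := by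
  have key : (0:ℝ) ≤ b (φt - φh) (φt - φh) := hbpos _
  have expand : b (φt - φh) (φt - φh) = b φt φt - 2 * b φt φh + b φh φh := by
    simp [map_sub, LinearMap.sub_apply, hbsymm φh φt]
    ring
  have h1 : a φh φh = b φt φh := hsol φh
  have h2 : a φh φh = b φh φh + s φh φh := ha φh φh
  have hs := hspos φh
  constructor <;> nlinarith [key, expand, h1, h2, hs]
end

section
/- Let V be a finite-dimensional real vector space with symmetric positive semidefinite bilinear forms b and s such that a := b + s is positive definite. Define the sequence (φⁿ) by a(φⁿ⁺¹, ψ) = b(φⁿ, ψ) for all ψ ∈ V. Then b(φⁿ, φⁿ) ≤ b(φ⁰, φ⁰) for all n ≥ 0. -/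
lemma cs_aux {V : Type*} [AddCommGroup V] [Module ℝ V]
    (b : LinearMap.BilinForm ℝ V)
    (hbsymm : ∀ x y, b x y = b y x) (hbpos : ∀ x, 0 ≤ b x x)
    (x y : V) : (b x y)^2 ≤ b x x * b y y := by
  have h : ∀ t : ℝ, 0 ≤ b y y * (t*t) + (2 * b x y) * t + b x x := by
    intro t
    have := hbpos (x + t • y)
    simp only [map_add, map_smul, LinearMap.add_apply, LinearMap.smul_apply,
      smul_eq_mul] at this
    rw [hbsymm y x] at this
    nlinarith [this]
  have hd := discrim_le_zero h
  unfold discrim at hd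
  nlinarith

/-- Long-time stability bound (Lemma 5.4, eq. (Est1)). -/
theorem stmt2
    {V : Type*} [AddCommGroup V] [Module ℝ V] [FiniteDimensional ℝ V]
    (b s : LinearMap.BilinForm ℝ V)
    (hbsymm : ∀ x y, b x y = b y x) (hbpos : ∀ x, 0 ≤ b x x)
    (hssymm : ∀ x y, s x y = s y x) (hspos : ∀ x, 0 ≤ s x x)
    (a : LinearMap.BilinForm ℝ V) (ha : ∀ x y, a x y = b x y + s x y)
    (hadef : ∀ x, x ≠ 0 → 0 < a x x)
    (φ : ℕ → V)
    (hrec : ∀ n, ∀ ψ : V, a (φ (n + 1)) ψ = b (φ n) ψ) :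
    ∀ n, b (φ n) (φ n) ≤ b (φ 0) (φ 0) := by
  have step : ∀ n, b (φ (n+1)) (φ (n+1)) ≤ b (φ n) (φ n) := by
    intro n
    have h1 : b (φ (n+1)) (φ (n+1)) ≤ b (φ n) (φ (n+1)) := by
      have := hrec n (φ (n+1))
      have hs := hspos (φ (n+1))
      rw [ha] at this
      linarith
    have h2 := cs_aux b hbsymm hbpos (φ n) (φ (n+1))
    have h3 := hbpos (φ (n+1))
    have h4 := hbpos (φ n)
    nlinarith
  intro n
  induction n with
  | zero => exact le_refl _
  | succ k ih => exact le_trans (step k) ih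
end

section
/- Let V be a finite-dimensional real vector space with symmetric positive semidefinite bilinear forms b and s such that a := b + s is positive definite, and let the sequence (φⁿ) satisfy a(φⁿ⁺¹, ψ) = b(φⁿ, ψ) for all ψ ∈ V. Then the ghost-penalty seminorm is monotonically nonincreasing: s(φⁿ⁺¹, φⁿ⁺¹) ≤ s(φⁿ, φⁿ) for all n ≥ 0. -/
/-- Monotonicity of the ghost-penalty seminorm along the repeated extension
iterates (key step in the proof of Lemma 5.4). -/
theorem stmt3
    {V : Type*} [AddCommGroup V] [Module ℝ V] [FiniteDimensional ℝ V]
    (b s : LinearMap.BilinForm ℝ V)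
    (hbsymm : ∀ x y, b x y = b y x) (hbpos : ∀ x, 0 ≤ b x x)
    (hssymm : ∀ x y, s x y = s y x) (hspos : ∀ x, 0 ≤ s x x)
    (a : LinearMap.BilinForm ℝ V) (ha : ∀ x y, a x y = b x y + s x y)
    (hadef : ∀ x, x ≠ 0 → 0 < a x x)
    (φ : ℕ → V)
    (hrec : ∀ n, ∀ ψ : V, a (φ (n + 1)) ψ = b (φ n) ψ) :
    ∀ n, s (φ (n + 1)) (φ (n + 1)) ≤ s (φ n) (φ n) := by
  intro n
  set x := φ (n + 1)
  set y := φ n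
  set A := s x x with hA
  set B := s y y with hB
  set C := s x y with hC
  -- From the recursion with ψ = x − y : b(x−y, x−y) + s(x, x−y) = 0
  have hrec' : b (x - y) (x - y) + s x (x - y) = 0 := by
    have h1 := hrec n (x - y)
    have h2 := ha x (x - y)
    have hsym : b x (x - y) - b y (x - y) = b (x - y) (x - y) := by
      simp [LinearMap.map_sub, LinearMap.sub_apply]
      ring
    nlinarith [h1, h2, hsym]
  have hAC : A ≤ C := by
    have hb := hbpos (x - y)
    have hexp : s x (x - y) = A - C := by
      simp [hA, hC, LinearMap.map_sub]
    nlinarith [hrec', hb, hexp]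
  -- Cauchy-Schwarz style: 0 ≤ s (A•y - C•x) (A•y - C•x) = A*(A*B - C^2)
  have hcs : 0 ≤ A * (A * B - C * C) := by
    have h := hspos ((A : ℝ) • y - C • x)
    have hexp : s ((A : ℝ) • y - C • x) ((A : ℝ) • y - C • x)
        = A * A * B - 2 * A * C * C + C * C * A := by
      simp [LinearMap.map_sub, LinearMap.map_smul, LinearMap.sub_apply,
        LinearMap.smul_apply, smul_eq_mul]
      rw [hssymm y x]
      ring
    nlinarith [h, hexp]
  have hApos := hspos x
  have hBpos := hspos y
  rcases eq_or_lt_of_le hApos with h0 | h0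
  · nlinarith
  · have hA2 : A * A ≤ C * C := mul_self_le_mul_self hApos hAC
    have hCB : C * C ≤ A * B := by nlinarith [hcs, h0]
    exact le_of_mul_le_mul_left (le_trans hA2 hCB) h0
end

section
/- Let V be a finite-dimensional real vector space with symmetric positive semidefinite bilinear forms b and s such that a := b + s is positive definite, and let the sequence (φⁿ) satisfy a(φⁿ⁺¹, ψ) = b(φⁿ, ψ) for all ψ ∈ V. Then for every n ≥ 1, b(φⁿ − φ⁰, φⁿ − φ⁰) ≤ 2 n · s(φ⁰, φ⁰). -/
/-- Cauchy–Schwarz for a positive semidefinite symmetric bilinear form. -/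
lemma bilin_cs_aux {V : Type*} [AddCommGroup V] [Module ℝ V]
    (B : LinearMap.BilinForm ℝ V) (hsymm : ∀ x y, B x y = B y x)
    (hpos : ∀ x, 0 ≤ B x x) (x y : V) : (B x y)^2 ≤ B x x * B y y := by
  have h : ∀ t : ℝ, 0 ≤ B y y * (t * t) + (2 * B x y) * t + B x x := by
    intro t
    have h0 := hpos (x + t • y)
    simp only [map_add, map_smul, LinearMap.add_apply, LinearMap.smul_apply,
      smul_eq_mul] at h0
    have hyx : B y x = B x y := hsymm y x
    rw [hyx] at h0
    nlinarith [h0]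
  have hd := discrim_le_zero h
  rw [discrim] at hd
  nlinarith

/-- Abstract √n growth bound (Lemma 5.4, eq. (Est3)). -/
theorem stmt4
    {V : Type*} [AddCommGroup V] [Module ℝ V] [FiniteDimensional ℝ V]
    (b s : LinearMap.BilinForm ℝ V)
    (hbsymm : ∀ x y, b x y = b y x) (hbpos : ∀ x, 0 ≤ b x x)
    (hssymm : ∀ x y, s x y = s y x) (hspos : ∀ x, 0 ≤ s x x)
    (a : LinearMap.BilinForm ℝ V) (ha : ∀ x y, a x y = b x y + s x y)
    (hadef : ∀ x, x ≠ 0 → 0 < a x x)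
    (φ : ℕ → V)
    (hrec : ∀ n, ∀ ψ : V, a (φ (n + 1)) ψ = b (φ n) ψ) :
    ∀ n : ℕ, 1 ≤ n →
      b (φ n - φ 0) (φ n - φ 0) ≤ 2 * (n : ℝ) * s (φ 0) (φ 0) := by
  intro n hn
  -- monotonicity of s along the iterates
  have hsmono : ∀ k, s (φ (k+1)) (φ (k+1)) ≤ s (φ k) (φ k) := by
    intro k
    have h1 := hrec k (φ k)
    have h2 := hrec k (φ (k+1))
    have hb := hbpos (φ k - φ (k+1))
    have hsp := hspos (φ k - φ (k+1))
    simp only [map_sub, LinearMap.sub_apply] at hb hsp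
    have e1 := ha (φ (k+1)) (φ k)
    have e2 := ha (φ (k+1)) (φ (k+1))
    have sb := hbsymm (φ k) (φ (k+1))
    have ss := hssymm (φ k) (φ (k+1))
    linarith
  have hsmono0 : ∀ k, s (φ k) (φ k) ≤ s (φ 0) (φ 0) := by
    intro k
    induction k with
    | zero => exact le_rfl
    | succ m ih => exact le_trans (hsmono m) ih
  set ψ : V := φ n - φ 0 with hψ
  -- bound on s ψ ψ
  have hψs : s ψ ψ ≤ 4 * s (φ 0) (φ 0) := by
    have hcs := bilin_cs_aux s hssymm hspos (φ n) (φ 0)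
    have hmono := hsmono0 n
    have h0 := hspos (φ 0)
    have hexp : s ψ ψ = s (φ n) (φ n) - 2 * s (φ n) (φ 0) + s (φ 0) (φ 0) := by
      simp only [hψ, map_sub, LinearMap.sub_apply]
      rw [hssymm (φ 0) (φ n)]; ring
    rw [hexp]
    nlinarith
  -- each telescoping term is bounded
  have hterm : ∀ k, - s (φ (k+1)) ψ ≤ 2 * s (φ 0) (φ 0) := by
    intro k
    have hcs := bilin_cs_aux s hssymm hspos (φ (k+1)) ψ
    have hmono := hsmono0 (k+1)
    have h0 := hspos (φ 0)
    have hsψ := hspos ψ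
    nlinarith
  -- telescoping identity
  have htel : b ψ ψ = ∑ k ∈ Finset.range n, (- s (φ (k+1)) ψ) := by
    have h1 : ∀ k, b (φ (k+1)) ψ - b (φ k) ψ = - s (φ (k+1)) ψ := by
      intro k
      have := hrec k ψ
      have := ha (φ (k+1)) ψ
      linarith [hrec k ψ, ha (φ (k+1)) ψ]
    have h2 : ∑ k ∈ Finset.range n, (b (φ (k+1)) ψ - b (φ k) ψ)
        = b (φ n) ψ - b (φ 0) ψ := Finset.sum_range_sub (fun k => b (φ k) ψ) n
    have h3 : b ψ ψ = b (φ n) ψ - b (φ 0) ψ := by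
      simp only [hψ, map_sub, LinearMap.sub_apply]
      rw [hbsymm (φ 0) (φ n)]
    rw [h3, ← h2]
    exact Finset.sum_congr rfl (fun k _ => h1 k)
  rw [htel]
  calc ∑ k ∈ Finset.range n, (- s (φ (k+1)) ψ)
      ≤ ∑ k ∈ Finset.range n, 2 * s (φ 0) (φ 0) :=
        Finset.sum_le_sum (fun k _ => hterm k)
    _ = (n : ℝ) * (2 * s (φ 0) (φ 0)) := by
        rw [Finset.sum_const, Finset.card_range, nsmul_eq_mul]
    _ = 2 * (n : ℝ) * s (φ 0) (φ 0) := by ring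
end

section
/- Let H be a real inner product space with inner product a(·,·) and induced norm ‖·‖_a, let W ⊆ H be a subspace, and let s : H × H → ℝ be a symmetric positive semidefinite bilinear form with ‖·‖_s := s(·,·)^{1/2}. Suppose φ ∈ H, φ̂ ∈ W satisfy the perturbed Galerkin orthogonality a(φ − φ̂, ψ) = s(φ, ψ) for all ψ ∈ W, and assume s satisfies the Cauchy–Schwarz-type bound |s(u, w)| ≤ ‖u‖_s ‖w‖_a for all u ∈ H, w ∈ W. Then for every I ∈ W, ‖I − φ̂‖_a ≤ ‖I − φ‖_a + ‖φ‖_s. -/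
open RealInnerProductSpace

lemma le_of_sq_le_mul {a c : ℝ} (ha : 0 ≤ a) (hc : 0 ≤ c) (h : a ^ 2 ≤ c * a) : a ≤ c := by
  rcases ha.eq_or_lt with rfl | ha
  · exact hc
  · exact le_of_mul_le_mul_right (by simpa [sq] using h) ha

theorem stmt7_general
    {H : Type*} [NormedAddCommGroup H] [InnerProductSpace ℝ H]
    (W : Submodule ℝ H)
    (s : LinearMap.BilinForm ℝ H)
    (φ : H) (φhat : H) (hφhat : φhat ∈ W)
    (hgal : ∀ ψ ∈ W, ⟪φ - φhat, ψ⟫ = s φ ψ)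
    (hCS : ∀ u : H, ∀ w ∈ W, |s u w| ≤ Real.sqrt (s u u) * ‖w‖) :
    ∀ I ∈ W, ‖I - φhat‖ ≤ ‖I - φ‖ + Real.sqrt (s φ φ) := by
  intro I hI
  have he : I - φhat ∈ W := W.sub_mem hI hφhat
  refine le_of_sq_le_mul (norm_nonneg _) (by positivity) ?_
  calc ‖I - φhat‖ ^ 2 = ⟪I - φ, I - φhat⟫ + ⟪φ - φhat, I - φhat⟫ := by
        rw [← inner_add_left, sub_add_sub_cancel, real_inner_self_eq_norm_sq]
    _ = ⟪I - φ, I - φhat⟫ + s φ (I - φhat) := by rw [hgal _ he]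
    _ ≤ ‖I - φ‖ * ‖I - φhat‖ + Real.sqrt (s φ φ) * ‖I - φhat‖ :=
        add_le_add (real_inner_le_norm _ _) ((le_abs_self _).trans (hCS φ _ he))
    _ = (‖I - φ‖ + Real.sqrt (s φ φ)) * ‖I - φhat‖ := by ring

/-- Abstract version of estimate (aux380) in the proof of Theorem 5.2:
quasi-best-approximation bound for a Galerkin method with consistency error
given by the ghost-penalty form `s`. Here the inner product of `H` plays the
role of `a` and `‖·‖` of the energy norm `‖·‖_a`. -/
theorem stmt7
    {H : Type*} [NormedAddCommGroup H] [InnerProductSpace ℝ H]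
    (W : Submodule ℝ H)
    (s : LinearMap.BilinForm ℝ H)
    (hssymm : ∀ x y, s x y = s y x) (hspos : ∀ x, 0 ≤ s x x)
    (φ : H) (φhat : H) (hφhat : φhat ∈ W)
    (hgal : ∀ ψ ∈ W, ⟪φ - φhat, ψ⟫ = s φ ψ)
    (hCS : ∀ u : H, ∀ w ∈ W, |s u w| ≤ Real.sqrt (s u u) * ‖w‖) :
    ∀ I ∈ W, ‖I - φhat‖ ≤ ‖I - φ‖ + Real.sqrt (s φ φ) :=
  stmt7_general W s φ φhat hφhat hgal hCS
end

section
/- Let V be a finite-dimensional real vector space, b and s symmetric positive semidefinite bilinear forms on V with a := b + s positive definite, and let (φⁿ) satisfy a(φⁿ⁺¹, ψ) = b(φⁿ, ψ) for all ψ ∈ V. Then for every n ≥ 0, b(φⁿ⁺¹ − φⁿ, φⁿ⁺¹ − φⁿ) + s(φⁿ⁺¹, φⁿ⁺¹) ≤ (1/2) s(φⁿ⁺¹, φⁿ⁺¹) + (1/2) s(φⁿ, φⁿ), and consequently b(φⁿ⁺¹ − φⁿ, φⁿ⁺¹ − φⁿ) ≤ (1/2)( s(φⁿ, φⁿ) −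 s(φⁿ⁺¹, φⁿ⁺¹) ); in particular Σ_{n=0}^{N−1} b(φⁿ⁺¹ − φⁿ, φⁿ⁺¹ − φⁿ) ≤ (1/2) s(φ⁰, φ⁰) for all N. -/
/-- Quantitative refinement from the proof of Lemma 5.4: telescoping bound on
the b-increments of the repeated extension procedure. -/
theorem stmt12
    {V : Type*} [AddCommGroup V] [Module ℝ V] [FiniteDimensional ℝ V]
    (b s : LinearMap.BilinForm ℝ V)
    (hbsymm : ∀ x y, b x y = b y x) (hbpos : ∀ x, 0 ≤ b x x)
    (hssymm : ∀ x y, s x y = s y x) (hspos : ∀ x, 0 ≤ s x x)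
    (a : LinearMap.BilinForm ℝ V) (ha : ∀ x y, a x y = b x y + s x y)
    (hadef : ∀ x, x ≠ 0 → 0 < a x x)
    (φ : ℕ → V)
    (hrec : ∀ n, ∀ ψ : V, a (φ (n + 1)) ψ = b (φ n) ψ) :
    (∀ n : ℕ,
      b (φ (n + 1) - φ n) (φ (n + 1) - φ n) + s (φ (n + 1)) (φ (n + 1)) ≤
        (1 / 2) * s (φ (n + 1)) (φ (n + 1)) + (1 / 2) * s (φ n) (φ n)) ∧
    (∀ n : ℕ,
      b (φ (n + 1) - φ n) (φ (n + 1) - φ n) ≤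
        (1 / 2) * (s (φ n) (φ n) - s (φ (n + 1)) (φ (n + 1)))) ∧
    (∀ N : ℕ,
      ∑ n ∈ Finset.range N, b (φ (n + 1) - φ n) (φ (n + 1) - φ n) ≤
        (1 / 2) * s (φ 0) (φ 0)) := by
  have key : ∀ n : ℕ,
      b (φ (n + 1) - φ n) (φ (n + 1) - φ n) + s (φ (n + 1)) (φ (n + 1)) ≤
        (1 / 2) * s (φ (n + 1)) (φ (n + 1)) + (1 / 2) * s (φ n) (φ n) := by
    intro n
    set p := φ (n + 1)
    set q := φ n
    have hr := hrec n (p - q)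
    rw [ha] at hr
    have hexp : ∀ (f : LinearMap.BilinForm ℝ V), f (p - q) (p - q) =
        f p p - f p q - f q p + f q q := by
      intro f
      simp [map_sub, LinearMap.sub_apply]
      ring
    have hbsub : b (p - q) (p - q) = b p p - b p q - b q p + b q q := hexp b
    have hssub : 0 ≤ s p p - s p q - s q p + s q q := (hexp s) ▸ hspos (p - q)
    have hpq : b p (p - q) + s p (p - q) = b q (p - q) := hr
    have h1 : b p p - b p q + (s p p - s p q) = b q p - b q q := by
      simpa [map_sub] using hpq
    have hbs := hbsymm q p
    have hss := hssymm q p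
    nlinarith [hspos p, hspos q]
  refine ⟨key, ?_, ?_⟩
  · intro n
    have := key n
    linarith
  · intro N
    have h2 : ∀ n : ℕ, b (φ (n + 1) - φ n) (φ (n + 1) - φ n) ≤
        (1 / 2) * (s (φ n) (φ n) - s (φ (n + 1)) (φ (n + 1))) := by
      intro n; have := key n; linarith
    calc ∑ n ∈ Finset.range N, b (φ (n + 1) - φ n) (φ (n + 1) - φ n)
        ≤ ∑ n ∈ Finset.range N,
            (1 / 2) * (s (φ n) (φ n) - s (φ (n + 1)) (φ (n + 1))) :=
          Finset.sum_le_sum fun n _ => h2 n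
      _ = (1 / 2) * (s (φ 0) (φ 0) - s (φ N) (φ N)) := by
          rw [← Finset.mul_sum, Finset.sum_range_sub' (fun n => s (φ n) (φ n))]
      _ ≤ (1 / 2) * s (φ 0) (φ 0) := by
          have := hspos (φ N); nlinarith
end

section
/- Let V be a finite-dimensional real vector space with symmetric positive semidefinite bilinear forms b and s, a := b + s positive definite, and let T : V → V be the linear map sending data φ̃ to the solution u of a(u, ψ) = b(φ̃, ψ) for all ψ ∈ V. Then T is self-adjoint with respect to the a-inner product, positive semidefinite, and satisfies a(Tφ, Tφ) ≤ a(φ, Tφ) ≤ a(φ, φ) for all φ ∈ V; in particular all eigenvalues of T lie in [0, 1]. -/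
/-- Spectral characterization of the ghost-penalty extension operator:
`T` is a-self-adjoint, positive semidefinite and a-contractive, so all its
eigenvalues lie in [0,1]. -/
theorem stmt14
    {V : Type*} [AddCommGroup V] [Module ℝ V] [FiniteDimensional ℝ V]
    (b s : LinearMap.BilinForm ℝ V)
    (hbsymm : ∀ x y, b x y = b y x) (hbpos : ∀ x, 0 ≤ b x x)
    (hssymm : ∀ x y, s x y = s y x) (hspos : ∀ x, 0 ≤ s x x)
    (a : LinearMap.BilinForm ℝ V) (ha : ∀ x y, a x y = b x y + s x y)
    (hadef : ∀ x, x ≠ 0 → 0 < a x x)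
    (T : V →ₗ[ℝ] V)
    (hT : ∀ φ ψ : V, a (T φ) ψ = b φ ψ) :
    (∀ φ ψ : V, a (T φ) ψ = a φ (T ψ)) ∧
    (∀ φ : V, 0 ≤ a φ (T φ)) ∧
    (∀ φ : V, a (T φ) (T φ) ≤ a φ (T φ) ∧ a φ (T φ) ≤ a φ φ) ∧
    (∀ μ : ℝ, ∀ v : V, v ≠ 0 → T v = μ • v → 0 ≤ μ ∧ μ ≤ 1) := by
  have hasymm : ∀ x y, a x y = a y x := fun x y => by rw [ha, ha, hbsymm, hssymm]
  have hself : ∀ φ ψ : V, a (T φ) ψ = a φ (T ψ) := fun φ ψ => by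
    rw [hT, hasymm, hT, hbsymm]
  have hpos : ∀ φ : V, 0 ≤ a φ (T φ) := fun φ => by
    rw [hasymm, hT]; exact hbpos φ
  have key : ∀ φ : V, a (T φ) (T φ) ≤ a φ (T φ) ∧ a φ (T φ) ≤ a φ φ := by
    intro φ
    have h1 : a (T φ) (T φ) = b φ (T φ) := hT φ (T φ)
    have h2 : a φ (T φ) = b φ φ := by rw [hasymm, hT]
    have h3 : 0 ≤ b (φ - T φ) (φ - T φ) := hbpos _
    have h4 : 0 ≤ s (T φ) (T φ) := hspos _
    have h5 : a (T φ) (T φ) = b (T φ) (T φ) + s (T φ) (T φ) := ha _ _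
    have hsym := hbsymm φ (T φ)
    have haa : a φ φ = b φ φ + s φ φ := ha _ _
    have h6 : 0 ≤ s φ φ := hspos φ
    simp only [map_sub, LinearMap.sub_apply] at h3
    constructor <;> linarith
  refine ⟨hself, hpos, key, ?_⟩
  intro μ v hv heig
  have havv : 0 < a v v := hadef v hv
  have h7 : a v (T v) = μ * a v v := by rw [heig, map_smul]; simp
  have h8 := hpos v
  have h9 := (key v).2
  rw [h7] at h8 h9
  constructor <;> nlinarith
end
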